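/- arXiv:1106.3826 — 8 statements merged into one kernel-verified Lean document; each statement's English description precedes it below -/
import Mathlib

section
/- Suppose that for every finite simple bipartite graph H admitting a perfect target set one has α·|V(H)| ≤ NPPTS(H) ≤ β·|V(H)| under the strict majority threshold (where α, β are fixed real constants). Then for every finite simple graph G admitting a perfect target set, α·|V(G)| ≤ NPPTS(G) ≤ β·|V(G)| under the strict majority threshold. -/
/-! Non-progressive spread of influence under the strict majority threshold. -/

/-- The degree `d(v)` of a vertex: the number of its neighbors. -/
noncomputable def vdeg {V : Type*} (G : SimpleGraph V) (v : V) : ℕ :=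
  {u | G.Adj v u}.ncard

/-- The strict majority threshold `t(v) = ⌈(d(v)+1)/2⌉`. -/
noncomputable def vthr {V : Type*} (G : SimpleGraph V) (v : V) : ℕ :=
  (vdeg G v + 2) / 2

/-- The number of neighbors of `v` that are currently infected under `f`. -/
noncomputable def infNbrs {V : Type*} (G : SimpleGraph V) (f : V → Prop) (v : V) : ℕ :=
  {u | G.Adj v u ∧ f u}.ncard

/-- The state `f_τ` of the non-progressive strict majority process started at `f0`:
`f_τ(v) = 1` iff at least `t(v)` neighbors of `v` were infected at time `τ - 1`. -/
def stateAt {V : Type*} (G : SimpleGraph V) (f0 : V → Prop) : ℕ → V → Prop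
  | 0 => f0
  | τ + 1 => fun v => vthr G v ≤ infNbrs G (stateAt G f0 τ) v

/-- `f0` is a perfect target set: at some finite time every vertex is infected. -/
def IsPTS {V : Type*} (G : SimpleGraph V) (f0 : V → Prop) : Prop :=
  ∃ τ : ℕ, ∀ v, stateAt G f0 τ v

/-- The cost of an initial assignment: the number of initially infected vertices. -/
noncomputable def ptsCost {V : Type*} (f0 : V → Prop) : ℕ :=
  {v | f0 v}.ncard

/-- `NPPTS G`: the minimum cost of a perfect target set of `G` (non-progressive model). -/
noncomputable def NPPTS {V : Type*} (G : SimpleGraph V) : ℕ :=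
  sInf {c | ∃ f0 : V → Prop, IsPTS G f0 ∧ ptsCost f0 = c}

/-- `G` is bipartite with parts `X` and `Y`: the parts are disjoint, cover the vertices,
and every edge goes between `X` and `Y`. -/
def BipartiteWith {V : Type*} (G : SimpleGraph V) (X Y : Set V) : Prop :=
  Disjoint X Y ∧ (∀ v, v ∈ X ∨ v ∈ Y) ∧
    ∀ ⦃a b⦄, G.Adj a b → (a ∈ X ∧ b ∈ Y) ∨ (a ∈ Y ∧ b ∈ X)

universe u

/-! Pass to the bipartite double cover of `G`, which has `2 |V(G)|` vertices. Since its edges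
join the two copies of `V(G)`, the majority process on the cover runs the process of `G` on each
copy, the copies trading roles at every step. So `f ↦ (f, f)` sends perfect target sets of `G` to
perfect target sets of the cover, and the two copies of a perfect target set of the cover are
perfect target sets of `G`. Hence `NPPTS` of the cover is `2 · NPPTS G`, and both ratio bounds
transfer from the cover to `G`. -/

open Function SimpleGraph

section Cost

variable {V : Type*}

lemma ptsCost_comp_of_bijective (f : V → Prop) {σ : V → V} (hσ : Bijective σ) :
    ptsCost (f ∘ σ) = ptsCost f :=
  Set.ncard_preimage_of_injective_subset_range hσ.1 (hσ.2.range_eq ▸ Set.subset_univ _)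

lemma ptsCost_sum [Finite V] (g : V ⊕ V → Prop) :
    ptsCost g = ptsCost (g ∘ Sum.inl) + ptsCost (g ∘ Sum.inr) := by
  have hsplit : {p | g p} = Sum.inl '' {v | g (.inl v)} ∪ Sum.inr '' {v | g (.inr v)} := by
    ext (v | v) <;> simp
  have hdisj : Disjoint (Sum.inl '' {v | g (.inl v)}) (Sum.inr '' {v | g (.inr v)}) :=
    Set.isCompl_range_inl_range_inr.disjoint.mono (Set.image_subset_range _ _)
      (Set.image_subset_range _ _)
  rw [ptsCost, hsplit, Set.ncard_union_eq hdisj, Set.ncard_image_of_injective _ Sum.inl_injective,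
    Set.ncard_image_of_injective _ Sum.inr_injective]
  rfl

lemma NPPTS_le_ptsCost {G : SimpleGraph V} {f : V → Prop} (hf : IsPTS G f) :
    NPPTS G ≤ ptsCost f :=
  Nat.sInf_le ⟨f, hf, rfl⟩

lemma exists_isPTS_ptsCost_eq_NPPTS {G : SimpleGraph V} (h : ∃ f, IsPTS G f) :
    ∃ f, IsPTS G f ∧ ptsCost f = NPPTS G := by
  obtain ⟨f, hf⟩ := h
  exact Nat.sInf_mem (s := {c | ∃ f, IsPTS G f ∧ ptsCost f = c}) ⟨_, f, hf, rfl⟩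

end Cost

section BipartiteDoubleCover

variable {V : Type*} (G : SimpleGraph V)

lemma vdeg_eq_infNbrs_true (v : V) : vdeg G v = infNbrs G (fun _ => True) v := by
  simp [vdeg, infNbrs]

lemma setOf_bipartiteDoubleCover_adj_inl_and (v : V) (P : V ⊕ V → Prop) :
    {q | G.bipartiteDoubleCover.Adj (.inl v) q ∧ P q} =
      Sum.inr '' {u | G.Adj v u ∧ P (.inr u)} := by
  ext (u | u) <;> simp

lemma setOf_bipartiteDoubleCover_adj_inr_and (v : V) (P : V ⊕ V → Prop) :
    {q | G.bipartiteDoubleCover.Adj (.inr v) q ∧ P q} =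
      Sum.inl '' {u | G.Adj v u ∧ P (.inl u)} := by
  ext (u | u) <;> simp

lemma infNbrs_bipartiteDoubleCover_inl (f : V ⊕ V → Prop) (v : V) :
    infNbrs G.bipartiteDoubleCover f (.inl v) = infNbrs G (f ∘ Sum.inr) v := by
  rw [infNbrs, setOf_bipartiteDoubleCover_adj_inl_and,
    Set.ncard_image_of_injective _ Sum.inr_injective]
  rfl

lemma infNbrs_bipartiteDoubleCover_inr (f : V ⊕ V → Prop) (v : V) :
    infNbrs G.bipartiteDoubleCover f (.inr v) = infNbrs G (f ∘ Sum.inl) v := by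
  rw [infNbrs, setOf_bipartiteDoubleCover_adj_inr_and,
    Set.ncard_image_of_injective _ Sum.inl_injective]
  rfl

lemma vthr_bipartiteDoubleCover_inl (v : V) : vthr G.bipartiteDoubleCover (.inl v) = vthr G v := by
  rw [vthr, vthr, vdeg_eq_infNbrs_true, vdeg_eq_infNbrs_true, infNbrs_bipartiteDoubleCover_inl]
  rfl

lemma vthr_bipartiteDoubleCover_inr (v : V) : vthr G.bipartiteDoubleCover (.inr v) = vthr G v := by
  rw [vthr, vthr, vdeg_eq_infNbrs_true, vdeg_eq_infNbrs_true, infNbrs_bipartiteDoubleCover_inr]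
  rfl

lemma stateAt_bipartiteDoubleCover (g : V ⊕ V → Prop) (τ : ℕ) :
    stateAt G.bipartiteDoubleCover g τ ∘ Sum.inl =
        stateAt G (g ∘ Sum.swap^[τ] ∘ Sum.inl) τ ∧
      stateAt G.bipartiteDoubleCover g τ ∘ Sum.inr =
        stateAt G (g ∘ Sum.swap^[τ] ∘ Sum.inr) τ := by
  induction τ with
  | zero => exact ⟨rfl, rfl⟩
  | succ τ ih =>
    refine ⟨funext fun v => propext ?_, funext fun v => propext ?_⟩
    · change vthr _ (Sum.inl v) ≤ infNbrs _ _ (Sum.inl v) ↔ vthr G v ≤ infNbrs G _ v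
      rw [vthr_bipartiteDoubleCover_inl, infNbrs_bipartiteDoubleCover_inl, ih.2, iterate_succ]
      rfl
    · change vthr _ (Sum.inr v) ≤ infNbrs _ _ (Sum.inr v) ↔ vthr G v ≤ infNbrs G _ v
      rw [vthr_bipartiteDoubleCover_inr, infNbrs_bipartiteDoubleCover_inr, ih.1, iterate_succ]
      rfl

lemma IsPTS.bipartiteDoubleCover {f : V → Prop} (hf : IsPTS G f) :
    IsPTS G.bipartiteDoubleCover (Sum.elim f f) := by
  obtain ⟨τ, hτ⟩ := hf
  have hswap : ∀ n, Sum.elim f f ∘ Sum.swap^[n] = Sum.elim f f := by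
    intro n
    induction n with
    | zero => rfl
    | succ n ih => rw [iterate_succ, ← comp_assoc, ih, Sum.elim_swap]
  obtain ⟨hl, hr⟩ := stateAt_bipartiteDoubleCover G (Sum.elim f f) τ
  rw [← comp_assoc, hswap] at hl hr
  refine ⟨τ, Sum.forall.2 ⟨fun v => ?_, fun v => ?_⟩⟩
  · exact (congrFun hl v).mpr (hτ v)
  · exact (congrFun hr v).mpr (hτ v)

lemma exists_isPTS_comp_inl_inr_of_isPTS_bipartiteDoubleCover {g : V ⊕ V → Prop}
    (hg : IsPTS G.bipartiteDoubleCover g) :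
    ∃ σ : V ⊕ V → V ⊕ V, Bijective σ ∧ IsPTS G (g ∘ σ ∘ Sum.inl) ∧
      IsPTS G (g ∘ σ ∘ Sum.inr) := by
  obtain ⟨τ, hτ⟩ := hg
  obtain ⟨hl, hr⟩ := stateAt_bipartiteDoubleCover G g τ
  refine ⟨Sum.swap^[τ], (Involutive.bijective Sum.swap_swap).iterate τ, ⟨τ, fun v => ?_⟩,
    ⟨τ, fun v => ?_⟩⟩
  · exact hl ▸ hτ (.inl v)
  · exact hr ▸ hτ (.inr v)

lemma NPPTS_bipartiteDoubleCover [Finite V] (h : ∃ f, IsPTS G f) :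
    NPPTS G.bipartiteDoubleCover = 2 * NPPTS G := by
  obtain ⟨f, hf, hfc⟩ := exists_isPTS_ptsCost_eq_NPPTS h
  obtain ⟨g, hg, hgc⟩ := exists_isPTS_ptsCost_eq_NPPTS ⟨_, hf.bipartiteDoubleCover G⟩
  obtain ⟨σ, hσ, hl, hr⟩ := exists_isPTS_comp_inl_inr_of_isPTS_bipartiteDoubleCover G hg
  apply le_antisymm
  · calc NPPTS G.bipartiteDoubleCover ≤ ptsCost (Sum.elim f f) :=
          NPPTS_le_ptsCost (hf.bipartiteDoubleCover G)
      _ = 2 * NPPTS G := by rw [ptsCost_sum, Sum.elim_comp_inl, Sum.elim_comp_inr, hfc, two_mul]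
  · calc 2 * NPPTS G ≤ ptsCost (g ∘ σ ∘ Sum.inl) + ptsCost (g ∘ σ ∘ Sum.inr) := by
          rw [two_mul]; exact add_le_add (NPPTS_le_ptsCost hl) (NPPTS_le_ptsCost hr)
      _ = NPPTS G.bipartiteDoubleCover := by
          rw [← hgc, ← ptsCost_comp_of_bijective g hσ, ptsCost_sum]; rfl

lemma bipartiteWith_bipartiteDoubleCover :
    BipartiteWith G.bipartiteDoubleCover (Set.range Sum.inl) (Set.range Sum.inr) :=
  ⟨Set.isCompl_range_inl_range_inr.disjoint, fun p => by cases p <;> simp,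
    by rintro (a | a) (b | b) h <;> simp_all⟩

end BipartiteDoubleCover

/-- If `α·|V(H)| ≤ NPPTS(H) ≤ β·|V(H)|` holds for every finite simple
bipartite graph `H` admitting a perfect target set (strict majority threshold), then
`α·|V(G)| ≤ NPPTS(G) ≤ β·|V(G)|` for every finite simple graph `G` admitting a perfect
target set. -/
theorem stmt_0 (α β : ℝ)
    (hbip : ∀ (W : Type u) [Fintype W] (H : SimpleGraph W),
      (∃ X Y : Set W, BipartiteWith H X Y) → (∃ g0 : W → Prop, IsPTS H g0) →
      α * (Fintype.card W : ℝ) ≤ (NPPTS H : ℝ) ∧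
        (NPPTS H : ℝ) ≤ β * (Fintype.card W : ℝ)) :
    ∀ (V : Type u) [Fintype V] (G : SimpleGraph V),
      (∃ f0 : V → Prop, IsPTS G f0) →
      α * (Fintype.card V : ℝ) ≤ (NPPTS G : ℝ) ∧
        (NPPTS G : ℝ) ≤ β * (Fintype.card V : ℝ) := by
  intro V _ G hG
  obtain ⟨f, hf⟩ := hG
  obtain ⟨hlow, hhigh⟩ := hbip (V ⊕ V) G.bipartiteDoubleCover
    ⟨_, _, bipartiteWith_bipartiteDoubleCover G⟩ ⟨_, hf.bipartiteDoubleCover G⟩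
  rw [Fintype.card_sum, NPPTS_bipartiteDoubleCover G ⟨f, hf⟩] at hlow hhigh
  push_cast at hlow hhigh
  constructor <;> linarith
end

section
/- Let G be a finite simple graph with vertex set {v_1,…,v_n}, and let H be the bipartite double cover of G: H has parts X = {x_1,…,x_n} and Y = {y_1,…,y_n} and edge set {x_i y_j : v_i v_j ∈ E(G)}, with strict majority thresholds on both G and H. Then an assignment f_0 : V(G) → {0,1} is a perfect target set for G under the non-progressive strict majority process if and only if the assignment g_0 on H defined by g_0(x_i) = g_0(y_i) = f_0(v_i) for every 1 ≤ i ≤ n is a perfect target set for H. -/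
/-- The bipartite double cover of `G`: vertices are `(v, b)` for `v ∈ V(G)` and
`b ∈ {false, true}` (part `X` is `V × {false}`, part `Y` is `V × {true}`), and
`(v_i, false)` is adjacent to `(v_j, true)` iff `v_i v_j ∈ E(G)`. -/
def doubleCover {V : Type*} (G : SimpleGraph V) : SimpleGraph (V × Bool) where
  Adj x y := G.Adj x.1 y.1 ∧ x.2 ≠ y.2
  symm := by
    constructor
    intro x y h
    exact ⟨h.1.symm, h.2.symm⟩
  loopless := by
    constructor
    intro x h
    exact h.2 rfl

section DoubleCover

variable {V : Type*} (G : SimpleGraph V)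

lemma setOf_doubleCover_adj_eq_image (P : V → Prop) (v : V) (b : Bool) :
    {x : V × Bool | (doubleCover G).Adj (v, b) x ∧ P x.1} =
      (fun u => (u, !b)) '' {u | G.Adj v u ∧ P u} := by
  ext ⟨u, c⟩
  simp only [doubleCover, Set.mem_ofPred_eq, Set.mem_image, Prod.mk.injEq]
  constructor
  · rintro ⟨⟨hvu, hbc⟩, hu⟩
    exact ⟨u, ⟨hvu, hu⟩, rfl, by cases b <;> cases c <;> simp_all⟩
  · rintro ⟨u, ⟨hvu, hu⟩, rfl, rfl⟩
    exact ⟨⟨hvu, by cases b <;> simp⟩, hu⟩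

lemma ncard_doubleCover_neighbors (P : V → Prop) (v : V) (b : Bool) :
    {x : V × Bool | (doubleCover G).Adj (v, b) x ∧ P x.1}.ncard =
      {u | G.Adj v u ∧ P u}.ncard := by
  rw [setOf_doubleCover_adj_eq_image]
  exact Set.ncard_image_of_injective _ fun u u' h => (Prod.mk.inj h).1

lemma vthr_doubleCover (v : V) (b : Bool) : vthr (doubleCover G) (v, b) = vthr G v := by
  have hdeg : vdeg (doubleCover G) (v, b) = vdeg G v := by
    simpa only [vdeg, and_true] using ncard_doubleCover_neighbors G (fun _ => True) v b
  rw [vthr, vthr, hdeg]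

lemma infNbrs_doubleCover (f : V → Prop) (v : V) (b : Bool) :
    infNbrs (doubleCover G) (fun x => f x.1) (v, b) = infNbrs G f v :=
  ncard_doubleCover_neighbors G f v b

lemma stateAt_doubleCover (f0 : V → Prop) (τ : ℕ) :
    stateAt (doubleCover G) (fun x => f0 x.1) τ = fun x => stateAt G f0 τ x.1 := by
  induction τ with
  | zero => rfl
  | succ τ ih =>
    funext ⟨v, b⟩
    simp only [stateAt, ih, infNbrs_doubleCover, vthr_doubleCover]

end DoubleCover

theorem stmt_1_general {V : Type*} (G : SimpleGraph V) (f0 : V → Prop) :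
    IsPTS G f0 ↔ IsPTS (doubleCover G) (fun x => f0 x.1) := by
  simp only [IsPTS, stateAt_doubleCover, Prod.forall, forall_const]

/-- `f0` is a perfect target set for `G` under the non-progressive
strict majority process iff the symmetric assignment `g0(x_i) = g0(y_i) = f0(v_i)` is a
perfect target set for the bipartite double cover of `G`. -/
theorem stmt_1 {V : Type*} [Fintype V] (G : SimpleGraph V) (f0 : V → Prop) :
    IsPTS G f0 ↔ IsPTS (doubleCover G) (fun x => f0 x.1) :=
  stmt_1_general G f0
end

section
/- Let G be a finite simple graph with vertex set {v_1,…,v_n}, and let H be the bipartite double cover of G: H has parts X = {x_1,…,x_n} and Y = {y_1,…,y_n} and edge set {x_i y_j : v_i v_j ∈ E(G)}, with strict majority thresholds on both G and H. If g_0 : V(H) → {0,1} is a perfect target set for H under the non-progressive strict majority process, then the assignment f_0 on G defined by f_0(v_i) = g_0(x_i) for every 1 ≤ i ≤ n is a perfect target set for G (and likewise the assignment v_i ↦ g_0(y_i) is a perfect target set for G). -/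
/-! A vertex `(v, b)` of the double cover sees exactly the copies `(u, !b)` of the neighbours of
`v`, with the same threshold. So the process on the double cover runs two copies of the process
on `G` that swap sides at every step: the run on `G` started from side `b` is read at time `τ`
on side `b ^^ τ.bodd`. -/

namespace doubleCover

variable {V : Type*} (G : SimpleGraph V)

@[simp]
lemma adj_mk {v u : V} {b c : Bool} :
    (doubleCover G).Adj (v, b) (u, c) ↔ G.Adj v u ∧ c = !b := by
  cases b <;> cases c <;> simp [doubleCover]

lemma ncard_adj_and (P : V × Bool → Prop) (v : V) (b : Bool) :
    {q | (doubleCover G).Adj (v, b) q ∧ P q}.ncard = {u | G.Adj v u ∧ P (u, !b)}.ncard := by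
  have hset : {q | (doubleCover G).Adj (v, b) q ∧ P q} =
      (fun u => (u, !b)) '' {u | G.Adj v u ∧ P (u, !b)} := by
    ext ⟨u, c⟩
    simp only [Set.mem_ofPred_eq, Set.mem_image, Prod.mk.injEq, adj_mk]
    constructor
    · rintro ⟨⟨hvu, rfl⟩, hP⟩
      exact ⟨u, ⟨hvu, hP⟩, rfl, rfl⟩
    · rintro ⟨w, ⟨hvw, hP⟩, rfl, rfl⟩
      exact ⟨⟨hvw, rfl⟩, hP⟩
  rw [hset, Set.ncard_image_of_injective _ fun _ _ h => congrArg Prod.fst h]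

lemma vthr_eq (v : V) (b : Bool) : vthr (doubleCover G) (v, b) = vthr G v := by
  simpa only [vthr, vdeg, and_true] using
    congrArg (fun d => (d + 2) / 2) (ncard_adj_and G (fun _ => True) v b)

lemma infNbrs_eq (g : V × Bool → Prop) (v : V) (b : Bool) :
    infNbrs (doubleCover G) g (v, b) = infNbrs G (fun u => g (u, !b)) v :=
  ncard_adj_and G g v b

lemma stateAt_eq (g0 : V × Bool → Prop) (τ : ℕ) (b : Bool) :
    stateAt G (fun u => g0 (u, b)) τ = fun v => stateAt (doubleCover G) g0 τ (v, b ^^ τ.bodd) := by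
  induction τ generalizing b with
  | zero => simp [stateAt]
  | succ τ ih =>
    funext v
    simp only [stateAt, ih, vthr_eq, infNbrs_eq, Nat.bodd_succ, Bool.xor_not, Bool.not_not]

end doubleCover

theorem stmt_2_general {V : Type*} (G : SimpleGraph V) (g0 : V × Bool → Prop)
    (h : IsPTS (doubleCover G) g0) :
    IsPTS G (fun v => g0 (v, false)) ∧ IsPTS G (fun v => g0 (v, true)) := by
  obtain ⟨τ, hτ⟩ := h
  have side (b : Bool) : IsPTS G (fun v => g0 (v, b)) :=
    ⟨τ, by rw [doubleCover.stateAt_eq]; exact fun v => hτ _⟩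
  exact ⟨side false, side true⟩

/-- If `g0` is a perfect target set for the bipartite double cover `H`
of `G` (under the non-progressive strict majority process), then the assignment
`v_i ↦ g0(x_i)` is a perfect target set for `G`, and likewise `v_i ↦ g0(y_i)`. -/
theorem stmt_2 {V : Type*} [Fintype V] (G : SimpleGraph V) (g0 : V × Bool → Prop)
    (h : IsPTS (doubleCover G) g0) :
    IsPTS G (fun v => g0 (v, false)) ∧ IsPTS G (fun v => g0 (v, true)) :=
  stmt_2_general G g0 h
end

section
/- Let G be a finite simple graph on n vertices and t : V(G) → ℕ an arbitrary function. If for every nonempty subset S ⊆ V(G) there exists at least one vertex v ∈ S with d_S(v) ≤ d(v) − t(v) (as integers), then |E(G)| ≤ Σ_{u∈V(G)} (d(u) − t(u)). -/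
/-- `d_S(v)`: the number of neighbors of `v` lying in the set `S`. -/
noncomputable def degIn {V : Type*} (G : SimpleGraph V) (S : Set V) (v : V) : ℕ :=
  {u | G.Adj v u ∧ u ∈ S}.ncard

def edgesIn {V : Type*} (G : SimpleGraph V) (S : Set V) : Set (Sym2 V) :=
  {e | e ∈ G.edgeSet ∧ ∀ x ∈ e, x ∈ S}

lemma edgesIn_split {V : Type*} (G : SimpleGraph V) (S : Set V) (v : V) :
    edgesIn G S = edgesIn G (S \ {v}) ∪ {e ∈ edgesIn G S | v ∈ e} := by
  ext e
  constructor
  · rintro ⟨he, hx⟩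
    by_cases hv : v ∈ e
    · exact Or.inr ⟨⟨he, hx⟩, hv⟩
    · exact Or.inl ⟨he, fun x hxe => ⟨hx x hxe, fun hxv => hv (hxv ▸ hxe)⟩⟩
  · rintro (⟨he, hx⟩ | ⟨he, _⟩)
    · exact ⟨he, fun x hxe => (hx x hxe).1⟩
    · exact he

lemma edgesIn_v_card {V : Type*} [Finite V] (G : SimpleGraph V) (S : Set V) (v : V)
    (hv : v ∈ S) :
    {e ∈ edgesIn G S | v ∈ e}.ncard = degIn G S v := by
  rw [degIn]
  have himg : (fun u => s(v,u)) '' {u | G.Adj v u ∧ u ∈ S} = {e ∈ edgesIn G S | v ∈ e} := by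
    ext e
    constructor
    · rintro ⟨u, ⟨hadj, hu⟩, rfl⟩
      refine ⟨⟨G.mem_edgeSet.2 hadj, ?_⟩, Sym2.mem_mk_left v u⟩
      intro x hx
      rcases Sym2.mem_iff.1 hx with rfl | rfl
      · exact hv
      · exact hu
    · intro he'
      induction e using Sym2.ind with
      | _ a b =>
        obtain ⟨⟨he, hx⟩, hve⟩ := he'
        rcases Sym2.mem_iff.1 hve with rfl | rfl
        · exact ⟨b, ⟨G.mem_edgeSet.1 he, hx b (Sym2.mem_mk_right _ _)⟩, rfl⟩
        · exact ⟨a, ⟨(G.mem_edgeSet.1 he).symm, hx a (Sym2.mem_mk_left _ _)⟩,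
            Sym2.eq_swap⟩
  rw [← himg]
  refine Set.ncard_image_of_injOn (fun u1 h1 u2 h2 hu => ?_)
  rcases Sym2.eq_iff.1 hu with ⟨_, h⟩ | ⟨_, h⟩
  · exact h
  · exact absurd h (G.ne_of_adj h1.1).symm

lemma aux {V : Type*} [Fintype V] (G : SimpleGraph V) (t : V → ℕ)
    (h : ∀ S : Set V, S.Nonempty →
      ∃ v ∈ S, (degIn G S v : ℤ) ≤ (vdeg G v : ℤ) - (t v : ℤ)) :
    ∀ S : Finset V, ((edgesIn G ↑S).ncard : ℤ) ≤ ∑ v ∈ S, ((vdeg G v : ℤ) - (t v : ℤ)) := by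
  intro S
  classical
  induction S using Finset.strongInduction with
  | _ S IH =>
    rcases S.eq_empty_or_nonempty with rfl | hne
    · have : edgesIn G (↑(∅ : Finset V)) = ∅ := by
        refine Set.eq_empty_iff_forall_notMem.2 (fun e => ?_)
        induction e using Sym2.ind with
        | _ a b =>
          rintro ⟨he, hx⟩
          exact absurd (hx a (Sym2.mem_mk_left a b)) (by simp)
      rw [this, Set.ncard_empty]
      simp
    · obtain ⟨v, hvS, hdeg⟩ := h ↑S (by exact_mod_cast hne.to_set)
      have hv : v ∈ S := hvS
      have hsplit := edgesIn_split G ↑S v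
      have hdisj : Disjoint (edgesIn G (↑S \ {v})) {e ∈ edgesIn G ↑S | v ∈ e} := by
        rw [Set.disjoint_left]
        rintro e ⟨_, hx⟩ ⟨_, hve⟩
        exact (hx v hve).2 rfl
      have hcard : (edgesIn G ↑S).ncard =
          (edgesIn G (↑S \ {v})).ncard + {e ∈ edgesIn G ↑S | v ∈ e}.ncard := by
        conv_lhs => rw [hsplit]
        exact Set.ncard_union_eq hdisj (Set.toFinite _) (Set.toFinite _)
      have hsub : (S.erase v) ⊂ S := Finset.erase_ssubset hv
      have hIH := IH _ hsub
      rw [Finset.coe_erase] at hIH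
      have hsum : ∑ u ∈ S, ((vdeg G u : ℤ) - (t u : ℤ)) =
          ∑ u ∈ S.erase v, ((vdeg G u : ℤ) - (t u : ℤ)) + ((vdeg G v : ℤ) - (t v : ℤ)) :=
        (Finset.sum_erase_add S _ hv).symm
      rw [hcard, hsum, edgesIn_v_card G ↑S v hvS]
      push_cast
      linarith

/-- If `t : V(G) → ℕ` is an arbitrary (threshold) function such that
every nonempty `S ⊆ V(G)` contains a vertex `v` with `d_S(v) ≤ d(v) − t(v)` (as
integers), then `|E(G)| ≤ Σ_{u ∈ V(G)} (d(u) − t(u))` (as integers). -/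
theorem stmt_4 {V : Type*} [Fintype V] (G : SimpleGraph V) (t : V → ℕ)
    (h : ∀ S : Set V, S.Nonempty →
      ∃ v ∈ S, (degIn G S v : ℤ) ≤ (vdeg G v : ℤ) - (t v : ℤ)) :
    (G.edgeSet.ncard : ℤ) ≤ ∑ u : V, ((vdeg G u : ℤ) - (t u : ℤ)) := by
  have := aux G t h Finset.univ
  have heq : edgesIn G ↑(Finset.univ : Finset V) = G.edgeSet := by
    ext e; simp [edgesIn]
  rwa [heq] at this
end

section
/- Let G be a finite simple graph with strict majority thresholds t(v) = ⌈(d(v)+1)/2⌉, and let W ⊆ V(G) be a set of vertices such that every vertex u ∈ V(G) satisfies |N(u) ∩ W| ≤ d(u) − t(u). Then the initial assignment f_0 with f_0(v) = 0 for v ∈ W and f_0(v) = 1 for v ∉ W is a perfect target set for the non-progressive strict majority process; in fact f_τ(v) = 1 for every vertex v and every τ ≥ 1. (This is the feasibility invariant underlying the Greedy NPPTS algorithm.) -/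
/-- If `W ⊆ V(G)` satisfies `|N(u) ∩ W| ≤ d(u) − t(u)` (as integers)
for every vertex `u`, then the assignment which infects exactly the vertices outside `W`
is a perfect target set for the non-progressive strict majority process; in fact
`f_τ(v) = 1` for every vertex `v` and every time `τ ≥ 1`. -/
theorem stmt_9 {V : Type*} [Fintype V] (G : SimpleGraph V) (W : Set V)
    (hW : ∀ u : V, (degIn G W u : ℤ) ≤ (vdeg G u : ℤ) - (vthr G u : ℤ)) :
    IsPTS G (fun v => v ∉ W) ∧
      ∀ τ : ℕ, 1 ≤ τ → ∀ v, stateAt G (fun v => v ∉ W) τ v := by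
  have hsplit : ∀ v, degIn G W v + {u | G.Adj v u ∧ u ∉ W}.ncard = vdeg G v := by
    intro v
    rw [degIn, vdeg, ← Set.ncard_union_eq ?_ (Set.toFinite _) (Set.toFinite _)]
    · congr 1; ext u; by_cases h : u ∈ W <;> simp [h]
    · rw [Set.disjoint_left]; rintro u ⟨_, hu⟩ ⟨_, hu'⟩; exact hu' hu
  have hthr : ∀ u, vthr G u ≤ vdeg G u := fun u => by
    have := hW u; have h0 : (0:ℤ) ≤ (degIn G W u : ℤ) := Int.ofNat_nonneg _
    omega
  have hA : ∀ v, vthr G v ≤ infNbrs G (fun u => u ∉ W) v := by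
    intro v
    have hs := hsplit v
    have hw := hW v
    have he : infNbrs G (fun u => u ∉ W) v = {u | G.Adj v u ∧ u ∉ W}.ncard := rfl
    omega
  have key : ∀ τ : ℕ, ∀ v, stateAt G (fun v => v ∉ W) (τ + 1) v := by
    intro τ
    induction τ with
    | zero => exact hA
    | succ n ih =>
      intro v
      show vthr G v ≤ infNbrs G _ v
      have he : infNbrs G (stateAt G (fun v => v ∉ W) (n + 1)) v = vdeg G v := by
        rw [infNbrs, vdeg]; congr 1; ext u; simp [ih u]
      rw [he]; exact hthr v
  refine ⟨⟨1, key 0⟩, fun τ hτ v => ?_⟩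
  cases τ with
  | zero => omega
  | succ n => exact key n v
end

section
/- Let G be a finite simple graph of order n with minimum degree δ = δ(G) ≥ 3 and maximum degree Δ = Δ(G), under the strict majority threshold t(v) = ⌈(d(v)+1)/2⌉. Then NPPTS(G) ≤ nΔ(δ+2) / (4Δ + (Δ+1)(δ−2)); that is, there exists a perfect target set f_0 for the non-progressive strict majority process with cost(f_0) ≤ nΔ(δ+2) / (4Δ + (Δ+1)(δ−2)). -/
/-- The maximum degree `Δ(G)`. -/
noncomputable def maxDeg {V : Type*} [Fintype V] (G : SimpleGraph V) : ℕ :=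
  Finset.univ.sup (vdeg G)

/-- The minimum degree `δ(G)`. -/
noncomputable def minDeg {V : Type*} (G : SimpleGraph V) : ℕ :=
  sInf (Set.range (vdeg G))

lemma ncard_filter_eq {V : Type*} [Fintype V] (p : V → Prop) [DecidablePred p] :
    {x | p x}.ncard = (Finset.univ.filter p).card := by
  rw [Set.ncard_eq_toFinset_card', Set.toFinset_setOf]

/-- For a finite simple graph `G` of order `n` with `δ = δ(G) ≥ 3`
and `Δ = Δ(G)`, under the strict majority threshold there is a perfect target set of
cost at most `nΔ(δ+2) / (4Δ + (Δ+1)(δ−2))`; in particular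
`NPPTS(G) ≤ nΔ(δ+2) / (4Δ + (Δ+1)(δ−2))`. -/
theorem stmt_10 {V : Type*} [Fintype V] (G : SimpleGraph V) (hδ : 3 ≤ minDeg G) :
    (∃ f0 : V → Prop, IsPTS G f0 ∧
      (ptsCost f0 : ℝ) ≤ (Fintype.card V : ℝ) * (maxDeg G : ℝ) * ((minDeg G : ℝ) + 2) /
        (4 * (maxDeg G : ℝ) + ((maxDeg G : ℝ) + 1) * ((minDeg G : ℝ) - 2))) ∧
    (NPPTS G : ℝ) ≤ (Fintype.card V : ℝ) * (maxDeg G : ℝ) * ((minDeg G : ℝ) + 2) /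
        (4 * (maxDeg G : ℝ) + ((maxDeg G : ℝ) + 1) * ((minDeg G : ℝ) - 2)) := by

  classical
  set δ := minDeg G with hδdef
  set Δ := maxDeg G with hΔdef
  set n := Fintype.card V with hn
  set N : V → Finset V := fun v => Finset.univ.filter (G.Adj v) with hN
  have hdd : ∀ v, vdeg G v = (N v).card := fun v => ncard_filter_eq _
  have hδle : ∀ v, δ ≤ vdeg G v := fun v => Nat.sInf_le ⟨v, rfl⟩
  have hΔge : ∀ v, vdeg G v ≤ Δ := fun v => Finset.le_sup (Finset.mem_univ v)
  set P : Finset V → Prop :=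
    fun S => ∀ v, ((N v).filter (· ∈ S)).card ≤ (vdeg G v - 1) / 2 with hP
  obtain ⟨S, hSP, hSmax⟩ : ∃ S, P S ∧ ∀ S', P S' → S'.card ≤ S.card := by
    obtain ⟨S, hS1, hS2⟩ := Finset.exists_max_image (Finset.univ.filter P) Finset.card
      ⟨∅, by simp [P]⟩
    exact ⟨S, (Finset.mem_filter.mp hS1).2,
      fun S' h => hS2 S' (Finset.mem_filter.mpr ⟨Finset.mem_univ _, h⟩)⟩
  set sd : V → ℕ := fun v => ((N v).filter (· ∈ S)).card with hsd
  -- maximality consequence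
  have hmaxl : ∀ u, u ∉ S → ∃ v, G.Adj v u ∧ (vdeg G v - 1) / 2 ≤ sd v := by
    intro u hu
    by_contra hcon
    push_neg at hcon
    have hP' : P (insert u S) := by
      intro v
      by_cases hadj : G.Adj v u
      · have h1 : ((N v).filter (· ∈ insert u S)) ⊆ insert u ((N v).filter (· ∈ S)) := by
          intro x hx
          simp only [Finset.mem_filter, Finset.mem_insert] at hx ⊢
          tauto
        have h2 := Finset.card_le_card h1
        have h3 := Finset.card_insert_le u ((N v).filter (· ∈ S))
        have h4 := hcon v hadj
        have h7 : sd v = ((N v).filter (· ∈ S)).card := rfl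
        omega
      · have h1 : ((N v).filter (· ∈ insert u S)) ⊆ (N v).filter (· ∈ S) := by
          intro x hx
          simp only [Finset.mem_filter, Finset.mem_insert] at hx ⊢
          rcases hx.2 with rfl | h
          · exact absurd (by simpa [hN] using hx.1) hadj
          · exact ⟨hx.1, h⟩
        exact le_trans (Finset.card_le_card h1) (hSP v)
    have h5 := hSmax _ hP'
    have h6 := Finset.card_insert_of_notMem hu
    omega
  set T := Finset.univ.filter (fun v => (vdeg G v - 1) / 2 ≤ sd v) with hT
  have hcover : Finset.univ.filter (· ∉ S) ⊆ T.biUnion (fun v => (N v).filter (· ∉ S)) := by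
    intro u hu
    simp only [Finset.mem_filter, Finset.mem_univ, true_and] at hu
    obtain ⟨v, hadj, hle⟩ := hmaxl u hu
    refine Finset.mem_biUnion.mpr ⟨v, ?_, ?_⟩
    · simp [hT, hle]
    · simp [hN, hadj, hu]
  have hcard1 : (Finset.univ.filter (· ∉ S)).card ≤ ∑ v ∈ T, ((N v).filter (· ∉ S)).card :=
    le_trans (Finset.card_le_card hcover) Finset.card_biUnion_le
  have hcompl : ∀ v, ((N v).filter (· ∉ S)).card = (N v).card - sd v := by
    intro v
    have := Finset.card_filter_add_card_filter_not (s := N v) (p := (· ∈ S))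
    simp only [hsd]
    omega
  have hper : ∀ v ∈ T, (δ - 2) * ((N v).filter (· ∉ S)).card ≤ (δ + 2) * sd v := by
    intro v hv
    have h1 : sd v ≤ (vdeg G v - 1) / 2 := hSP v
    have h2 : (vdeg G v - 1) / 2 ≤ sd v := by
      simpa [hT] using (Finset.mem_filter.mp hv).2
    have h3 := hcompl v
    have h4 := hdd v
    have h5 := hδle v
    set c := ((N v).filter (· ∉ S)).card with hc
    have hc2 : c ≤ sd v + 2 := by omega
    have hs2 : δ - 2 ≤ 2 * sd v := by omega
    calc (δ - 2) * c ≤ (δ - 2) * (sd v + 2) := Nat.mul_le_mul_left _ hc2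
      _ = (δ - 2) * sd v + (δ - 2) * 2 := by ring
      _ ≤ (δ - 2) * sd v + (2 * sd v) * 2 :=
          Nat.add_le_add_left (Nat.mul_le_mul_right _ hs2) _
      _ = (δ - 2 + 4) * sd v := by ring
      _ ≤ (δ + 2) * sd v := Nat.mul_le_mul_right _ (by omega)
  have hdc : ∑ v, sd v = ∑ s ∈ S, (N s).card := by
    have h1 : ∀ v, sd v = ∑ s ∈ S, if G.Adj v s then 1 else 0 := by
      intro v
      have he : ((N v).filter (· ∈ S)) = S.filter (fun s => G.Adj v s) := by
        ext x; simp [hN, and_comm]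
      rw [hsd]
      simp only [he]
      rw [Finset.card_filter]
    have h2 : ∀ s, (N s).card = ∑ v : V, if G.Adj v s then 1 else 0 := by
      intro s
      rw [hN]
      rw [Finset.card_filter]
      exact Finset.sum_congr rfl (fun v _ => by rw [G.adj_comm])
    simp_rw [h1, h2]
    exact Finset.sum_comm
  have hsumT : ∑ v ∈ T, sd v ≤ ∑ v, sd v :=
    Finset.sum_le_sum_of_subset (Finset.subset_univ T)
  have hΔS : ∑ s ∈ S, (N s).card ≤ S.card * Δ := by
    have := Finset.sum_le_card_nsmul S (fun s => (N s).card) Δ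
      (fun s _ => by show (N s).card ≤ Δ; rw [← hdd s]; exact hΔge s)
    simpa [smul_eq_mul] using this
  set m := (Finset.univ.filter (· ∉ S)).card with hm
  have hmk : m + S.card = n := by
    have h2 : Finset.univ.filter (· ∉ S) = Sᶜ := by ext x; simp
    have h3 : Sᶜ.card = n - S.card := Finset.card_compl S
    have h4 : S.card ≤ n := Finset.card_le_univ S
    rw [hm, h2, h3]
    omega
  have hkey : (δ - 2) * m ≤ (δ + 2) * Δ * S.card := by
    calc (δ - 2) * m ≤ (δ - 2) * ∑ v ∈ T, ((N v).filter (· ∉ S)).card :=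
          Nat.mul_le_mul_left _ hcard1
      _ = ∑ v ∈ T, (δ - 2) * ((N v).filter (· ∉ S)).card := Finset.mul_sum _ _ _
      _ ≤ ∑ v ∈ T, (δ + 2) * sd v := Finset.sum_le_sum hper
      _ = (δ + 2) * ∑ v ∈ T, sd v := (Finset.mul_sum _ _ _).symm
      _ ≤ (δ + 2) * ∑ v, sd v := Nat.mul_le_mul_left _ hsumT
      _ = (δ + 2) * ∑ s ∈ S, (N s).card := by rw [hdc]
      _ ≤ (δ + 2) * (S.card * Δ) := Nat.mul_le_mul_left _ hΔS
      _ = (δ + 2) * Δ * S.card := by ring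
  have hfin : ((δ + 2) * Δ + (δ - 2)) * m ≤ (δ + 2) * Δ * n := by
    have : ((δ + 2) * Δ + (δ - 2)) * m = (δ + 2) * Δ * m + (δ - 2) * m := by ring
    rw [this, ← hmk]
    have : (δ + 2) * Δ * (m + S.card) = (δ + 2) * Δ * m + (δ + 2) * Δ * S.card := by ring
    rw [this]
    omega
  -- the target set
  set f0 : V → Prop := fun v => v ∉ S with hf0
  have hinf : ∀ v, infNbrs G f0 v = ((N v).filter (· ∉ S)).card := by
    intro v
    rw [infNbrs, ncard_filter_eq]
    congr 1
    ext x
    simp [hN, hf0]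
  have hPTS : IsPTS G f0 := by
    refine ⟨1, fun v => ?_⟩
    show vthr G v ≤ infNbrs G (stateAt G f0 0) v
    have h0 : stateAt G f0 0 = f0 := rfl
    rw [h0, hinf v, hcompl v]
    unfold vthr
    have h1 : sd v ≤ (vdeg G v - 1) / 2 := hSP v
    have h4 := hdd v
    have h5 := hδle v
    omega
  have hcost : ptsCost f0 = m := by
    rw [ptsCost, ncard_filter_eq]
  -- real arithmetic
  have h3δ : (3 : ℝ) ≤ (δ : ℝ) := by exact_mod_cast hδ
  have hΔ0 : (0 : ℝ) ≤ (Δ : ℝ) := Nat.cast_nonneg _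
  have hD : (0 : ℝ) < 4 * (Δ : ℝ) + ((Δ : ℝ) + 1) * ((δ : ℝ) - 2) := by nlinarith
  have hsub : ((δ - 2 : ℕ) : ℝ) = (δ : ℝ) - 2 := by
    have : (2 : ℕ) ≤ δ := by omega
    exact Nat.cast_sub this
  have hcast : ((δ : ℝ) + 2) * Δ * m + ((δ : ℝ) - 2) * m ≤ ((δ : ℝ) + 2) * Δ * n := by
    have := (Nat.cast_le (α := ℝ)).mpr hfin
    push_cast at this
    rw [hsub] at this
    linarith
  have hbound : (m : ℝ) ≤ (n : ℝ) * (Δ : ℝ) * ((δ : ℝ) + 2) /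
      (4 * (Δ : ℝ) + ((Δ : ℝ) + 1) * ((δ : ℝ) - 2)) := by
    rw [le_div_iff₀ hD]
    calc (m : ℝ) * (4 * (Δ : ℝ) + ((Δ : ℝ) + 1) * ((δ : ℝ) - 2))
        = ((δ : ℝ) + 2) * Δ * m + ((δ : ℝ) - 2) * m := by ring
      _ ≤ ((δ : ℝ) + 2) * Δ * n := hcast
      _ = (n : ℝ) * (Δ : ℝ) * ((δ : ℝ) + 2) := by ring
  have hNP : NPPTS G ≤ ptsCost f0 := Nat.sInf_le ⟨f0, hPTS, rfl⟩
  refine ⟨⟨f0, hPTS, by rw [hcost]; exact hbound⟩, ?_⟩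
  calc (NPPTS G : ℝ) ≤ (ptsCost f0 : ℝ) := by exact_mod_cast hNP
    _ = (m : ℝ) := by rw [hcost]
    _ ≤ _ := hbound
end

section
/- Let G be a finite simple graph with vertices u_1,…,u_n, e = |E(G)| edges, and minimum degree at least 1, and let s_i = Σ_{k=1}^{i} d_G(u_k) (so s_0 = 0 and s_n = 2e). Define the graph H with vertex set X_0 ∪ X_1 ∪ X_2 ∪ X_3 ∪ X_4 ∪ X_5 ∪ X_6, where X_0 = {g_1,g_2}, X_1 = {a_1,…,a_{2e+1}}, X_2 = {b_1,…,b_{2e+1}}, X_3 = {c_1,…,c_{2e}}, X_4 = {w_1,…,w_n}, X_5 = {v_1,…,v_n}, X_6 = {d_1,…,d_{2e}}, and edge set consisting of: g_1 a_i for 1 ≤ i ≤ 2e+1; g_2 b_i for 1 ≤ i ≤ 2e+1; g_1 c_i and g_2 c_i for 1 ≤ i ≤ 2e; w_i c_j for 1 ≤ i ≤ n and s_{i−1} < j ≤ s_i; v_i w_j whenever u_i u_j ∈ E(G) or i = j; and v_i d_j for 1 ≤ i ≤ n and s_{i−1} < j ≤ s_i. Then, under the strict majority threshold, NPPTS(H)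 = 2e + n + 4 + γ(G), where γ(G) is the domination number of G. -/
/-- The domination number `γ(G)`: the minimum cardinality of a set `D` of vertices such
that every vertex not in `D` has a neighbor in `D`. -/
noncomputable def domNum {V : Type*} (G : SimpleGraph V) : ℕ :=
  sInf {k | ∃ D : Set V, (∀ v, v ∉ D → ∃ u ∈ D, G.Adj u v) ∧ D.ncard = k}

/-- The vertex set of the gadget graph `H`:
`X₀ = {g₁, g₂}`, `X₁ = {a_i}`, `X₂ = {b_i}` (each of size `2e+1`), `X₃ = {c_i}`,
`X₆ = {d_i}` (each of size `2e`), and `X₄ = {w_i}`, `X₅ = {v_i}` (each of size `n`). -/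
inductive HVert (n e : ℕ) : Type
  | g1 : HVert n e
  | g2 : HVert n e
  | a : Fin (2 * e + 1) → HVert n e
  | b : Fin (2 * e + 1) → HVert n e
  | c : Fin (2 * e) → HVert n e
  | w : Fin n → HVert n e
  | v : Fin n → HVert n e
  | d : Fin (2 * e) → HVert n e

/-- `psum G i = s_i = Σ_{k=1}^{i} d(u_k)`, the partial sums of the degree sequence of
`G` (so `psum G 0 = 0` and `psum G n = 2e`). -/
noncomputable def psum {n : ℕ} (G : SimpleGraph (Fin n)) (i : ℕ) : ℕ :=
  ∑ k ∈ Finset.range i, if h : k < n then vdeg G ⟨k, h⟩ else 0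

/-- The (oriented) edge relation of the gadget graph `H`; 0-based indices `j : Fin (2e)`
correspond to the 1-based index `j+1`, so `s_{i−1} < j+1 ≤ s_i` reads
`s_{i-1} ≤ j < s_i`. -/
def hrel {n e : ℕ} (G : SimpleGraph (Fin n)) : HVert n e → HVert n e → Prop
  | .g1, .a _ => True
  | .g2, .b _ => True
  | .g1, .c _ => True
  | .g2, .c _ => True
  | .w i, .c j => psum G i.val ≤ j.val ∧ j.val < psum G (i.val + 1)
  | .v i, .w j => G.Adj i j ∨ i = j
  | .v i, .d j => psum G i.val ≤ j.val ∧ j.val < psum G (i.val + 1)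
  | _, _ => False

/-- The gadget graph `H` built from `G`: edges `g₁a_i`, `g₂b_i` (`1 ≤ i ≤ 2e+1`),
`g₁c_i`, `g₂c_i` (`1 ≤ i ≤ 2e`), `w_i c_j` and `v_i d_j` (`s_{i−1} < j ≤ s_i`), and
`v_i w_j` whenever `u_i u_j ∈ E(G)` or `i = j`. -/
def Hgraph {n e : ℕ} (G : SimpleGraph (Fin n)) : SimpleGraph (HVert n e) where
  Adj x y := hrel G x y ∨ hrel G y x
  symm := ⟨fun _ _ h => Or.symm h⟩
  loopless := ⟨by
    intro x h
    rcases h with h | h <;> cases x <;> exact h⟩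

/-!
Upper bound: starting from a minimum dominating set `D` of `G`, infect `g₁, g₂, a₁, b₁`, all of
`X₃ ∪ X₄` and the `v_i` with `u_i ∈ D`. After one step every vertex outside `X₆` is infected
(each `g` sees `2e + 1` infected neighbours, each `w_i` sees its `d(u_i)` vertices of `X₃` and
one `v_m` with `u_m ∈ N[u_i]`), and after two steps every vertex is.

Lower bound: in the non-progressive process, both "`g₁` is infected" and "every `u_k` has a
closed neighbour `u_m` with `v_m` infected" propagate two steps back in time (through the
pendant vertices `a_i`, resp. through `d_j` or `w_k`). Once every vertex is infected it stays
so, hence both hold at two consecutive times and therefore at times 0 and 1. At time 1, `g₁`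
and `g₂` need `2e + 1` infected neighbours at time 0, while `X₃` supplies at most `2e`; the
domination property at time 0 costs `γ(G)` vertices of `X₅`; and at time 1 it forces at least
`n` infected vertices of `X₄ ∪ X₆` at time 0, since an infected `v_m` needs all `w_k` with
`u_k ∈ N[u_m]` or one of its private `d_j`.
-/

open Finset
open scoped Classical

lemma two_step_descent {P : ℕ → Prop} (h : ∀ t, P (t + 2) → P t) :
    ∀ σ, P σ → P (σ + 1) → P 0 ∧ P 1
  | 0, h0, h1 => ⟨h0, h1⟩
  | σ + 1, h0, h1 => two_step_descent h σ (h σ h1) h0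

lemma card_le_card_filter_add_sum {α : Type*} [Fintype α] (S : Finset α) (N : α → Finset α)
    (p : α → Prop) (hS : ∀ k, ∃ i ∈ S, k ∈ N i) :
    Fintype.card α ≤ #{k | p k} + ∑ i ∈ S, #{k ∈ N i | ¬ p k} := calc
  Fintype.card α = #(univ : Finset α) := card_univ.symm
  _ ≤ #(({k | p k} : Finset α) ∪ S.biUnion fun i => {k ∈ N i | ¬ p k}) := card_le_card fun k _ => by
    by_cases hk : p k
    · simp [hk]
    · obtain ⟨i, hi, hki⟩ := hS k
      exact mem_union_right _ (mem_biUnion.2 ⟨i, hi, mem_filter.2 ⟨hki, hk⟩⟩)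
  _ ≤ _ := (card_union_le _ _).trans (Nat.add_le_add_left card_biUnion_le _)

section MajorityProcess
variable {V : Type*} (K : SimpleGraph V)

def majorityStep (f : V → Prop) (v : V) : Prop := vthr K v ≤ infNbrs K f v

lemma stateAt_zero (f0 : V → Prop) : stateAt K f0 0 = f0 := rfl

lemma majorityStep_iff {f : V → Prop} {v : V} :
    majorityStep K f v ↔ (infNbrs K (fun _ => True) v + 2) / 2 ≤ infNbrs K f v := by
  simp [majorityStep, vthr, vdeg, infNbrs]

lemma infNbrs_eq_sum [Fintype V] (f : V → Prop) (v : V) :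
    infNbrs K f v = ∑ u, if K.Adj v u ∧ f u then 1 else 0 := by
  rw [infNbrs, Set.ncard_eq_toFinset_card', Finset.sum_boole]
  simp

lemma majorityStep_iff_of_adj_iff {f : V → Prop} {v w : V} (h : ∀ u, K.Adj v u ↔ u = w) :
    majorityStep K f v ↔ f w := by
  have hnbrs : ∀ g : V → Prop, {u | K.Adj v u ∧ g u} = if g w then {w} else ∅ := by
    intro g
    ext u
    split_ifs <;> simp_all
  simp only [majorityStep_iff, infNbrs, hnbrs]
  split_ifs <;> simp_all

end MajorityProcess

section Graph
variable {V : Type*} [Fintype V] (G : SimpleGraph V)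

noncomputable def closedNbhd (v : V) : Finset V := {u | G.Adj v u ∨ v = u}

lemma vdeg_eq_degree (v : V) : vdeg G v = G.degree v := by
  rw [vdeg, ← G.card_neighborFinset_eq_degree, ← Set.ncard_coe_finset]
  simp [SimpleGraph.neighborSet]

lemma mem_closedNbhd_comm {u v : V} : u ∈ closedNbhd G v ↔ v ∈ closedNbhd G u := by
  simp [closedNbhd, G.adj_comm, eq_comm]

lemma self_mem_closedNbhd (v : V) : v ∈ closedNbhd G v := by simp [closedNbhd]

lemma card_closedNbhd (v : V) : #(closedNbhd G v) = vdeg G v + 1 := by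
  have : closedNbhd G v = insert v (G.neighborFinset v) := by
    ext u
    simp [closedNbhd, eq_comm, or_comm]
  rw [this, card_insert_of_notMem (by simp), G.card_neighborFinset_eq_degree, vdeg_eq_degree]

lemma dominating_iff_closedNbhd (D : Set V) :
    (∀ v, v ∉ D → ∃ u ∈ D, G.Adj u v) ↔ ∀ v, ∃ u ∈ closedNbhd G v, u ∈ D := by
  refine ⟨fun h v => ?_, fun h v hv => ?_⟩
  · by_cases hv : v ∈ D
    · exact ⟨v, self_mem_closedNbhd G v, hv⟩
    · obtain ⟨u, hu, huv⟩ := h v hv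
      exact ⟨u, by simp [closedNbhd, huv.symm], hu⟩
  · obtain ⟨u, hu, huD⟩ := h v
    rcases (by simpa [closedNbhd] using hu : G.Adj v u ∨ v = u) with huv | rfl
    · exact ⟨u, huD, huv.symm⟩
    · exact absurd huD hv

end Graph

lemma exists_dominating_ncard_eq_domNum {V : Type*} (G : SimpleGraph V) :
    ∃ D : Set V, (∀ v, v ∉ D → ∃ u ∈ D, G.Adj u v) ∧ D.ncard = domNum G :=
  Nat.sInf_mem (s := {k | ∃ D : Set V, (∀ v, v ∉ D → ∃ u ∈ D, G.Adj u v) ∧ D.ncard = k})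
    ⟨_, Set.univ, fun _ hv => absurd (Set.mem_univ _) hv, rfl⟩

namespace HVert
variable {n e : ℕ}

def equivSum : HVert n e ≃
    Unit ⊕ Unit ⊕ Fin (2 * e + 1) ⊕ Fin (2 * e + 1) ⊕ Fin (2 * e) ⊕ Fin n ⊕ Fin n ⊕ Fin (2 * e)
    where
  toFun
    | g1 => .inl () | g2 => .inr (.inl ()) | a i => .inr (.inr (.inl i))
    | b i => .inr (.inr (.inr (.inl i))) | c j => .inr (.inr (.inr (.inr (.inl j))))
    | w i => .inr (.inr (.inr (.inr (.inr (.inl i)))))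
    | v i => .inr (.inr (.inr (.inr (.inr (.inr (.inl i))))))
    | d j => .inr (.inr (.inr (.inr (.inr (.inr (.inr j))))))
  invFun
    | .inl () => g1 | .inr (.inl ()) => g2 | .inr (.inr (.inl i)) => a i
    | .inr (.inr (.inr (.inl i))) => b i | .inr (.inr (.inr (.inr (.inl j)))) => c j
    | .inr (.inr (.inr (.inr (.inr (.inl i))))) => w i
    | .inr (.inr (.inr (.inr (.inr (.inr (.inl i)))))) => v i
    | .inr (.inr (.inr (.inr (.inr (.inr (.inr j)))))) => d j
  left_inv x := by cases x <;> rfl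
  right_inv s := by rcases s with _ | _ | _ | _ | _ | _ | _ | _ <;> rfl

instance : Fintype (HVert n e) := Fintype.ofEquiv _ equivSum.symm

lemma sum_eq {M : Type*} [AddCommMonoid M] (φ : HVert n e → M) :
    ∑ x, φ x = φ g1 + φ g2 + ∑ i, φ (a i) + ∑ i, φ (b i) + ∑ j, φ (c j) + ∑ i, φ (w i)
      + ∑ i, φ (v i) + ∑ j, φ (d j) := by
  rw [← equivSum.symm.sum_comp]
  simp [Fintype.sum_sum_type, equivSum, add_assoc]

end HVert

section Gadget
variable {n e : ℕ} (G : SimpleGraph (Fin n)) (f : HVert n e → Prop)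

lemma psum_succ (i : Fin n) : psum G (i + 1) = psum G i + vdeg G i := by
  simp [psum, Finset.sum_range_succ]

lemma psum_mono : Monotone (psum G) := fun _ _ h =>
  Finset.sum_le_sum_of_subset (Finset.range_subset_range.2 h)

lemma psum_self (he : G.edgeSet.ncard = e) : psum G n = 2 * e := by
  have hcard : #G.edgeFinset = e := by
    rw [← Set.ncard_coe_finset, SimpleGraph.coe_edgeFinset, he]
  rw [← hcard, ← G.sum_degrees_eq_twice_card_edges, psum, ← Fin.sum_univ_eq_sum_range]
  simp [vdeg_eq_degree]

lemma exists_psum_le_lt {j m : ℕ} (hj : j < psum G m) :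
    ∃ i < m, psum G i ≤ j ∧ j < psum G (i + 1) := by
  induction m with
  | zero => simp [psum] at hj
  | succ m ih =>
    by_cases h : j < psum G m
    · obtain ⟨i, hi, h⟩ := ih h
      exact ⟨i, by omega, h⟩
    · exact ⟨m, by omega, by omega, hj⟩

noncomputable def block (i : Fin n) : Finset (Fin (2 * e)) :=
  {j | psum G i ≤ j ∧ j < psum G (i + 1)}

lemma exists_mem_block (he : G.edgeSet.ncard = e) (j : Fin (2 * e)) : ∃ i, j ∈ block G i := by
  obtain ⟨i, hi, h⟩ := exists_psum_le_lt G (m := n) (j := j) (by rw [psum_self G he]; exact j.isLt)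
  exact ⟨⟨i, hi⟩, by simpa [block] using h⟩

lemma eq_of_mem_block {i i' : Fin n} {j : Fin (2 * e)} (h : j ∈ block G i) (h' : j ∈ block G i') :
    i = i' := by
  simp only [block, mem_filter, mem_univ, true_and] at h h'
  by_contra hne
  rcases Fin.lt_or_lt_of_ne hne with hlt | hlt
  · have := psum_mono G (show (i : ℕ) + 1 ≤ i' from hlt); omega
  · have := psum_mono G (show (i' : ℕ) + 1 ≤ i from hlt); omega

lemma card_block (he : G.edgeSet.ncard = e) (i : Fin n) : #(block (e := e) G i) = vdeg G i := by
  have hle : psum G (i + 1) ≤ 2 * e := psum_self G he ▸ psum_mono G i.isLt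
  have hsucc := psum_succ G i
  have : block G i = ({j : Fin (2 * e) | j < psum G (i + 1)} : Finset _) \
      ({j : Fin (2 * e) | j < psum G i} : Finset _) := by
    ext j
    simp [block, and_comm]
  rw [this, card_sdiff_of_subset (fun j => by simp; omega), Fin.card_filter_val_lt,
    Fin.card_filter_val_lt]
  omega

lemma infNbrs_g1 : infNbrs (Hgraph G) f .g1 = #{i | f (.a i)} + #{j | f (.c j)} := by
  rw [infNbrs_eq_sum, HVert.sum_eq]
  simp [Hgraph, hrel]

lemma infNbrs_g2 : infNbrs (Hgraph G) f .g2 = #{i | f (.b i)} + #{j | f (.c j)} := by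
  rw [infNbrs_eq_sum, HVert.sum_eq]
  simp [Hgraph, hrel]

lemma infNbrs_c (j : Fin (2 * e)) : infNbrs (Hgraph G) f (.c j) =
    (if f .g1 then 1 else 0) + (if f .g2 then 1 else 0) + #{i | j ∈ block G i ∧ f (.w i)} := by
  rw [infNbrs_eq_sum, HVert.sum_eq]
  simp [Hgraph, hrel, block]

lemma infNbrs_w (i : Fin n) : infNbrs (Hgraph G) f (.w i) =
    #{j ∈ block G i | f (.c j)} + #{k ∈ closedNbhd G i | f (.v k)} := by
  rw [infNbrs_eq_sum, HVert.sum_eq]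
  simp [Hgraph, hrel, block, closedNbhd, Finset.filter_filter, G.adj_comm, eq_comm]
  congr

lemma infNbrs_v (i : Fin n) : infNbrs (Hgraph G) f (.v i) =
    #{k ∈ closedNbhd G i | f (.w k)} + #{j ∈ block G i | f (.d j)} := by
  rw [infNbrs_eq_sum, HVert.sum_eq]
  simp [Hgraph, hrel, block, closedNbhd, Finset.filter_filter]
  congr

lemma majorityStep_a (i : Fin (2 * e + 1)) : majorityStep (Hgraph G) f (.a i) ↔ f .g1 :=
  majorityStep_iff_of_adj_iff _ fun u => by cases u <;> simp [Hgraph, hrel]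

lemma majorityStep_b (i : Fin (2 * e + 1)) : majorityStep (Hgraph G) f (.b i) ↔ f .g2 :=
  majorityStep_iff_of_adj_iff _ fun u => by cases u <;> simp [Hgraph, hrel]

lemma majorityStep_d {i : Fin n} {j : Fin (2 * e)} (hij : j ∈ block G i) :
    majorityStep (Hgraph G) f (.d j) ↔ f (.v i) :=
  majorityStep_iff_of_adj_iff _ fun u => by
    cases u with
    | v k =>
      have hadj : (Hgraph G).Adj (.d j) (.v k) ↔ j ∈ block G k := by simp [Hgraph, hrel, block]
      rw [hadj, HVert.v.injEq]
      exact ⟨fun hk => eq_of_mem_block G hk hij, fun hki => hki ▸ hij⟩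
    | _ => simp [Hgraph, hrel]

lemma majorityStep_g1 :
    majorityStep (Hgraph G) f .g1 ↔ 2 * e + 1 ≤ #{i | f (.a i)} + #{j | f (.c j)} := by
  rw [majorityStep_iff, infNbrs_g1, infNbrs_g1]
  simp only [filter_true, card_univ, Fintype.card_fin]
  omega

lemma majorityStep_g2 :
    majorityStep (Hgraph G) f .g2 ↔ 2 * e + 1 ≤ #{i | f (.b i)} + #{j | f (.c j)} := by
  rw [majorityStep_iff, infNbrs_g2, infNbrs_g2]
  simp only [filter_true, card_univ, Fintype.card_fin]
  omega

lemma majorityStep_w (he : G.edgeSet.ncard = e) (i : Fin n) :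
    majorityStep (Hgraph G) f (.w i) ↔
      vdeg G i + 1 ≤ #{j ∈ block G i | f (.c j)} + #{k ∈ closedNbhd G i | f (.v k)} := by
  rw [majorityStep_iff, infNbrs_w, infNbrs_w]
  simp only [filter_true, card_block G he, card_closedNbhd]
  omega

lemma majorityStep_v (he : G.edgeSet.ncard = e) (i : Fin n) :
    majorityStep (Hgraph G) f (.v i) ↔
      vdeg G i + 1 ≤ #{k ∈ closedNbhd G i | f (.w k)} + #{j ∈ block G i | f (.d j)} := by
  rw [majorityStep_iff, infNbrs_v, infNbrs_v]
  simp only [filter_true, card_block G he, card_closedNbhd]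
  omega

lemma majorityStep_c (he : G.edgeSet.ncard = e) (j : Fin (2 * e)) (h1 : f .g1) (h2 : f .g2) :
    majorityStep (Hgraph G) f (.c j) := by
  obtain ⟨i, hi⟩ := exists_mem_block G he j
  have hw : #{k | j ∈ block G k} = 1 :=
    card_eq_one.2 ⟨i, by ext k; simpa using ⟨fun hk => eq_of_mem_block G hk hi, fun h => h ▸ hi⟩⟩
  rw [majorityStep_iff, infNbrs_c, infNbrs_c]
  simp [h1, h2, hw]

lemma forall_majorityStep_of_forall_ne_d (he : G.edgeSet.ncard = e) (hg1 : f .g1) (hg2 : f .g2)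
    (ha : ∀ i, f (.a i)) (hb : ∀ i, f (.b i)) (hc : ∀ j, f (.c j)) (hw : ∀ i, f (.w i))
    (hv : ∀ i, f (.v i)) : ∀ x, majorityStep (Hgraph G) f x
  | .g1 => (majorityStep_g1 G f).2 (by simp [ha])
  | .g2 => (majorityStep_g2 G f).2 (by simp [hb])
  | .a _ => (majorityStep_a G f _).2 hg1
  | .b _ => (majorityStep_b G f _).2 hg2
  | .c j => majorityStep_c G f he j hg1 hg2
  | .w i => (majorityStep_w G f he i).2 (by simp [hc, hv, card_block G he, card_closedNbhd])
  | .v i => (majorityStep_v G f he i).2 (by simp [hw, card_closedNbhd])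
  | .d j => (exists_mem_block G he j).elim fun _ hi => (majorityStep_d G f hi).2 (hv _)

lemma exists_a_of_majorityStep_g1 (h : majorityStep (Hgraph G) f .g1) : ∃ i, f (.a i) := by
  rw [majorityStep_g1] at h
  have : #{j | f (.c j)} ≤ 2 * e := (card_filter_le _ _).trans_eq (by simp)
  simpa [filter_nonempty_iff] using card_pos.1 (show 0 < #{i | f (.a i)} by omega)

lemma exists_b_of_majorityStep_g2 (h : majorityStep (Hgraph G) f .g2) : ∃ i, f (.b i) := by
  rw [majorityStep_g2] at h
  have : #{j | f (.c j)} ≤ 2 * e := (card_filter_le _ _).trans_eq (by simp)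
  simpa [filter_nonempty_iff] using card_pos.1 (show 0 < #{i | f (.b i)} by omega)

lemma exists_v_of_majorityStep_w (he : G.edgeSet.ncard = e) {i : Fin n}
    (h : majorityStep (Hgraph G) f (.w i)) : ∃ k ∈ closedNbhd G i, f (.v k) := by
  rw [majorityStep_w G f he] at h
  have : #{j ∈ block G i | f (.c j)} ≤ vdeg G i := (card_filter_le _ _).trans_eq (card_block G he i)
  simpa [filter_nonempty_iff] using card_pos.1 (show 0 < #{k ∈ closedNbhd G i | f (.v k)} by omega)

lemma majorityStep_v_cases (he : G.edgeSet.ncard = e) {i : Fin n}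
    (h : majorityStep (Hgraph G) f (.v i)) :
    (∃ j ∈ block G i, f (.d j)) ∨ ∀ k ∈ closedNbhd G i, f (.w k) := by
  rw [majorityStep_v G f he] at h
  by_cases hd : ∃ j ∈ block G i, f (.d j)
  · exact .inl hd
  · have h0 : #{j ∈ block G i | f (.d j)} = 0 :=
      card_eq_zero.2 (filter_eq_empty_iff.2 fun j hj hdj => hd ⟨j, hj, hdj⟩)
    have : #{k ∈ closedNbhd G i | f (.w k)} ≤ #(closedNbhd G i) := card_filter_le _ _
    exact .inr (card_filter_eq_iff.1 (by have := card_closedNbhd G i; omega))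

end Gadget

section LowerBound
variable {n e : ℕ} (G : SimpleGraph (Fin n))

lemma ptsCost_eq (f : HVert n e → Prop) : ptsCost f =
    (if f .g1 then 1 else 0) + (if f .g2 then 1 else 0) + #{i | f (.a i)} + #{i | f (.b i)}
      + #{j | f (.c j)} + #{i | f (.w i)} + #{i | f (.v i)} + #{j | f (.d j)} := by
  rw [ptsCost, Set.ncard_eq_toFinset_card', Set.toFinset_ofPred, card_filter, HVert.sum_eq]
  simp

def VDominates (f : HVert n e → Prop) : Prop := ∀ k, ∃ m ∈ closedNbhd G k, f (.v m)

lemma domNum_le_card_v {f : HVert n e → Prop} (h : VDominates G f) :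
    domNum G ≤ #{i | f (.v i)} :=
  Nat.sInf_le ⟨{i | f (.v i)}, (dominating_iff_closedNbhd G _).2 h,
    by simp [Set.ncard_eq_toFinset_card']⟩

lemma sum_card_block_le (S : Finset (Fin n)) (p : Fin (2 * e) → Prop) :
    ∑ i ∈ S, #{j ∈ block G i | p j} ≤ #{j | p j} := by
  rw [← card_biUnion]
  · exact card_le_card fun j hj => by
      obtain ⟨i, -, hj⟩ := mem_biUnion.1 hj
      exact mem_filter.2 ⟨mem_univ j, (mem_filter.1 hj).2⟩
  · intro i _ i' _ hne
    exact disjoint_filter_filter (disjoint_left.2 fun j hj hj' => hne (eq_of_mem_block G hj hj'))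

lemma le_card_w_add_card_d (he : G.edgeSet.ncard = e) {f : HVert n e → Prop}
    (h : VDominates G (majorityStep (Hgraph G) f)) : n ≤ #{i | f (.w i)} + #{j | f (.d j)} := by
  set S : Finset (Fin n) := {i | majorityStep (Hgraph G) f (.v i)}
  have hcover : ∀ k, ∃ i ∈ S, k ∈ closedNbhd G i := fun k => by
    obtain ⟨m, hm, hvm⟩ := h k
    exact ⟨m, by simpa [S] using hvm, (mem_closedNbhd_comm G).1 hm⟩
  have hpriv : ∀ i ∈ S, #{k ∈ closedNbhd G i | ¬ f (.w k)} ≤ #{j ∈ block G i | f (.d j)} := by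
    intro i hi
    have hv := (majorityStep_v G f he i).1 (by simpa [S] using hi)
    have := card_filter_add_card_filter_not (s := closedNbhd G i) (fun k => f (.w k))
    have := card_closedNbhd G i
    omega
  calc n = Fintype.card (Fin n) := (Fintype.card_fin n).symm
    _ ≤ #{i | f (.w i)} + ∑ i ∈ S, #{k ∈ closedNbhd G i | ¬ f (.w k)} :=
      card_le_card_filter_add_sum S _ _ hcover
    _ ≤ #{i | f (.w i)} + #{j | f (.d j)} :=
      Nat.add_le_add_left ((sum_le_sum hpriv).trans (sum_card_block_le G S _)) _

variable (f0 : HVert n e → Prop)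

lemma stateAt_g1_of_add_two (t : ℕ) (h : stateAt (Hgraph G) f0 (t + 2) .g1) :
    stateAt (Hgraph G) f0 t .g1 := by
  obtain ⟨i, hi⟩ := exists_a_of_majorityStep_g1 G _ h
  exact (majorityStep_a G _ i).1 hi

lemma stateAt_g2_of_add_two (t : ℕ) (h : stateAt (Hgraph G) f0 (t + 2) .g2) :
    stateAt (Hgraph G) f0 t .g2 := by
  obtain ⟨i, hi⟩ := exists_b_of_majorityStep_g2 G _ h
  exact (majorityStep_b G _ i).1 hi

lemma vDominates_of_add_two (he : G.edgeSet.ncard = e) (t : ℕ)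
    (h : VDominates G (stateAt (Hgraph G) f0 (t + 2))) :
    VDominates G (stateAt (Hgraph G) f0 t) := by
  intro k
  obtain ⟨m, hkm, hm⟩ := h k
  rcases majorityStep_v_cases G _ he hm with ⟨j, hj, hdj⟩ | hw
  · exact ⟨m, hkm, (majorityStep_d G _ hj).1 hdj⟩
  · exact exists_v_of_majorityStep_w G _ he (hw k ((mem_closedNbhd_comm G).1 hkm))

lemma add_le_ptsCost (he : G.edgeSet.ncard = e) (hPTS : IsPTS (Hgraph G) f0) :
    2 * e + n + 4 + domNum G ≤ ptsCost f0 := by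
  obtain ⟨τ, hτ⟩ := hPTS
  have hτ1 : ∀ x, stateAt (Hgraph G) f0 (τ + 1) x :=
    forall_majorityStep_of_forall_ne_d G _ he (hτ _) (hτ _) (fun _ => hτ _) (fun _ => hτ _)
      (fun _ => hτ _) (fun _ => hτ _) (fun _ => hτ _)
  have hg1 := two_step_descent (P := fun t => stateAt (Hgraph G) f0 t .g1)
    (stateAt_g1_of_add_two G f0) τ (hτ _) (hτ1 _)
  have hg2 := two_step_descent (P := fun t => stateAt (Hgraph G) f0 t .g2)
    (stateAt_g2_of_add_two G f0) τ (hτ _) (hτ1 _)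
  have hdom := two_step_descent (P := fun t => VDominates G (stateAt (Hgraph G) f0 t))
    (vDominates_of_add_two G f0 he) τ
    (fun k => ⟨k, self_mem_closedNbhd G k, hτ _⟩) (fun k => ⟨k, self_mem_closedNbhd G k, hτ1 _⟩)
  have ha := (majorityStep_g1 G f0).1 hg1.2
  have hb := (majorityStep_g2 G f0).1 hg2.2
  have hc : #{j | f0 (.c j)} ≤ 2 * e := (card_filter_le _ _).trans_eq (by simp)
  have hv := domNum_le_card_v G hdom.1
  have hwd := le_card_w_add_card_d G he hdom.2
  rw [stateAt_zero] at hv hwd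
  rw [ptsCost_eq]
  simp only [show f0 .g1 from hg1.1, show f0 .g2 from hg2.1, if_true]
  omega

end LowerBound

section UpperBound
variable {n e : ℕ} (G : SimpleGraph (Fin n)) (D : Set (Fin n))

def seed : HVert n e → Prop
  | .g1 | .g2 | .c _ | .w _ => True
  | .a i | .b i => i = 0
  | .v i => i ∈ D
  | .d _ => False

@[simp] lemma card_seed_a : #{i | seed (e := e) D (.a i)} = 1 :=
  card_eq_one.2 ⟨0, by ext; rw [mem_filter, mem_singleton]; simp [seed]⟩

@[simp] lemma card_seed_b : #{i | seed (e := e) D (.b i)} = 1 :=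
  card_eq_one.2 ⟨0, by ext; rw [mem_filter, mem_singleton]; simp [seed]⟩

@[simp] lemma card_seed_c : #{j | seed (e := e) D (.c j)} = 2 * e := calc
  #{j | seed (e := e) D (.c j)} = #(univ : Finset (Fin (2 * e))) :=
    card_filter_eq_iff.2 fun _ _ => trivial
  _ = 2 * e := by simp

@[simp] lemma card_seed_w : #{i | seed (e := e) D (.w i)} = n := calc
  #{i | seed (e := e) D (.w i)} = #(univ : Finset (Fin n)) :=
    card_filter_eq_iff.2 fun _ _ => trivial
  _ = n := by simp

@[simp] lemma card_seed_v : #{i | seed (e := e) D (.v i)} = D.ncard := by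
  rw [Set.ncard_eq_toFinset_card']
  congr 1
  ext
  rw [mem_filter]
  simp [seed]

@[simp] lemma card_seed_d : #{j | seed (e := e) D (.d j)} = 0 :=
  card_eq_zero.2 (filter_false_of_mem fun _ _ h => h)

lemma ptsCost_seed : ptsCost (seed (e := e) D) = 2 * e + n + 4 + D.ncard := by
  rw [ptsCost_eq]
  simp only [card_seed_a, card_seed_b, card_seed_c, card_seed_w, card_seed_v, card_seed_d]
  simp [seed]
  ring

lemma seed_isPTS (he : G.edgeSet.ncard = e) (hD : ∀ v, v ∉ D → ∃ u ∈ D, G.Adj u v) :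
    IsPTS (Hgraph G) (seed (e := e) D) := by
  have hw : ∀ i, majorityStep (Hgraph G) (seed D) (.w i) := fun i => by
    obtain ⟨k, hk, hkD⟩ := (dominating_iff_closedNbhd G D).1 hD i
    have hc : #{j ∈ block G i | seed (e := e) D (.c j)} = #(block G i) :=
      card_filter_eq_iff.2 fun _ _ => trivial
    have hv : 0 < #{k ∈ closedNbhd G i | seed (e := e) D (.v k)} :=
      card_pos.2 ⟨k, mem_filter.2 ⟨hk, hkD⟩⟩
    rw [majorityStep_w G _ he, hc, card_block G he]
    omega
  have hv : ∀ i, majorityStep (Hgraph G) (seed D) (.v i) := fun i => by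
    have hall : #{k ∈ closedNbhd G i | seed (e := e) D (.w k)} = #(closedNbhd G i) :=
      card_filter_eq_iff.2 fun _ _ => trivial
    rw [majorityStep_v G _ he, hall, card_closedNbhd]
    omega
  have h1 := forall_majorityStep_of_forall_ne_d G (majorityStep (Hgraph G) (seed D)) he
    ((majorityStep_g1 G _).2 (by simp)) ((majorityStep_g2 G _).2 (by simp))
    (fun i => (majorityStep_a G _ i).2 trivial) (fun i => (majorityStep_b G _ i).2 trivial)
    (fun j => majorityStep_c G _ he j trivial trivial) hw hv
  exact ⟨2, h1⟩

end UpperBound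

theorem stmt_12_general {n e : ℕ} (G : SimpleGraph (Fin n))
    (he : G.edgeSet.ncard = e) :
    NPPTS (Hgraph (n := n) (e := e) G) = 2 * e + n + 4 + domNum G := by
  obtain ⟨D, hD, hDcard⟩ := exists_dominating_ncard_eq_domNum G
  have hseed : 2 * e + n + 4 + domNum G ∈
      {c | ∃ f0 : HVert n e → Prop, IsPTS (Hgraph G) f0 ∧ ptsCost f0 = c} :=
    ⟨seed D, seed_isPTS G D he hD, by rw [ptsCost_seed, hDcard]⟩
  refine le_antisymm (Nat.sInf_le hseed) (le_csInf ⟨_, hseed⟩ ?_)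
  rintro _ ⟨f0, hf0, rfl⟩
  exact add_le_ptsCost G f0 he hf0

/-- For a finite simple graph `G` with `n` vertices, `e` edges and
minimum degree at least `1`, the gadget graph `H` satisfies
`NPPTS(H) = 2e + n + 4 + γ(G)` under the strict majority threshold. -/
theorem stmt_12 {n e : ℕ} (G : SimpleGraph (Fin n))
    (hmin : ∀ v : Fin n, 1 ≤ vdeg G v) (he : G.edgeSet.ncard = e) :
    NPPTS (Hgraph (n := n) (e := e) G) = 2 * e + n + 4 + domNum G :=
  stmt_12_general G he
end

section
/- For every finite simple graph G with strict majority thresholds and every initial assignment f_0 : V(G) → {0,1}, the non-progressive strict majority process reaches a cycle of length at most two: there exists a time T such that f_{τ+2}(v) = f_τ(v) for every vertex v ∈ V(G) and every τ ≥ T. -/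
/-! The Goles–Olivos energy argument works for any thresholds `θ` on a finite graph. For two
consecutive states put `E(s, s') = ∑ᵥ (2θᵥ - 1)(sᵥ + s'ᵥ) - 2 ∑ᵥ s'ᵥ · #{u ∈ N(v) | sᵤ}`.
Since adjacency is symmetric, one step changes `E` by
`∑ᵥ (f_{τ+2}(v) - f_τ(v)) (2θᵥ - 1 - 2 #{u ∈ N(v) | f_{τ+1}(u)})`. Comparing with the
half-integral threshold `θᵥ - 1/2`, which is never hit, each summand is `≤ -1` if
`f_{τ+2}(v) ≠ f_τ(v)` and `≤ 0` otherwise. The energy takes finitely many values, so it can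
drop only finitely often, and afterwards `f_{τ+2} = f_τ`. -/

lemma Int.exists_forall_ge_not_of_bddBelow {e : ℕ → ℤ} {P : ℕ → Prop}
    (hbdd : BddBelow (Set.range e)) (hle : ∀ t, e (t + 1) ≤ e t)
    (hlt : ∀ t, P t → e (t + 1) < e t) : ∃ T, ∀ t, T ≤ t → ¬ P t := by
  obtain ⟨_, ⟨T, rfl⟩, hT⟩ := Int.exists_least_of_bdd (P := (· ∈ Set.range e))
    (let ⟨b, hb⟩ := hbdd; ⟨b, fun _ hz => hb hz⟩) ⟨e 0, 0, rfl⟩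
  refine ⟨T, fun t hTt hPt => ?_⟩
  have hanti : e t ≤ e T := antitone_nat_of_succ_le hle hTt
  exact (hlt t hPt).not_ge (hanti.trans (hT _ ⟨t + 1, rfl⟩))

open Classical in
noncomputable def iverson (p : Prop) : ℤ := if p then 1 else 0

lemma iverson_of_pos {p : Prop} (hp : p) : iverson p = 1 := by
  simp [iverson, hp]

lemma iverson_nonneg (p : Prop) : 0 ≤ iverson p := by
  by_cases hp : p <;> simp [iverson, hp]

lemma iverson_sub_mul_le_neg_iverson {p q : Prop} {θ n : ℕ} (hp : p ↔ θ ≤ n) :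
    (iverson p - iverson q) * (2 * (θ : ℤ) - 1 - 2 * n) ≤ -iverson (¬(p ↔ q)) := by
  by_cases hq : q <;> by_cases hθ : θ ≤ n <;> simp [iverson, hq, hθ, hp]
  lia

namespace SimpleGraph

variable {V : Type*} [Fintype V] (G : SimpleGraph V)

lemma infNbrs_eq_sum_iverson (s : V → Prop) (v : V) :
    (infNbrs G s v : ℤ) = ∑ u, iverson (G.Adj v u ∧ s u) := by
  classical
  rw [infNbrs, Set.ncard_eq_toFinset_card', Set.toFinset_ofPred, Finset.card_filter]
  push_cast
  exact Finset.sum_congr rfl fun u _ => by simp [iverson]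

lemma sum_iverson_mul_infNbrs_comm (s s' : V → Prop) :
    ∑ v, iverson (s' v) * infNbrs G s v = ∑ v, iverson (s v) * infNbrs G s' v := by
  simp only [infNbrs_eq_sum_iverson, Finset.mul_sum]
  rw [Finset.sum_comm]
  refine Finset.sum_congr rfl fun u _ => Finset.sum_congr rfl fun v _ => ?_
  by_cases hs : s u <;> by_cases hs' : s' v <;> by_cases hadj : G.Adj u v <;>
    simp [iverson, hs, hs', hadj, G.adj_comm v u]

noncomputable def energy (θ : V → ℕ) (s s' : V → Prop) : ℤ :=
  ∑ v, (2 * (θ v : ℤ) - 1) * (iverson (s v) + iverson (s' v))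
    - 2 * ∑ v, iverson (s' v) * infNbrs G s v

lemma energy_sub_energy (θ : V → ℕ) (s₀ s₁ s₂ : V → Prop) :
    energy G θ s₁ s₂ - energy G θ s₀ s₁
      = ∑ v, (iverson (s₂ v) - iverson (s₀ v)) * (2 * (θ v : ℤ) - 1 - 2 * infNbrs G s₁ v) := by
  rw [energy, energy, sum_iverson_mul_infNbrs_comm G s₀ s₁, Finset.mul_sum, Finset.mul_sum,
    ← Finset.sum_sub_distrib, ← Finset.sum_sub_distrib, ← Finset.sum_sub_distrib]
  exact Finset.sum_congr rfl fun v _ => by ring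

variable {G} {θ : V → ℕ} {x : ℕ → V → Prop}

lemma energy_succ_add_sum_iverson_le (hx : ∀ t v, x (t + 1) v ↔ θ v ≤ infNbrs G (x t) v)
    (t : ℕ) :
    energy G θ (x (t + 1)) (x (t + 2)) + ∑ v, iverson (¬(x (t + 2) v ↔ x t v))
      ≤ energy G θ (x t) (x (t + 1)) := by
  have hstep := energy_sub_energy G θ (x t) (x (t + 1)) (x (t + 2))
  have hterm := Finset.sum_le_sum fun v (_ : v ∈ Finset.univ) =>
    iverson_sub_mul_le_neg_iverson (p := x (t + 2) v) (q := x t v) (hx (t + 1) v)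
  rw [Finset.sum_neg_distrib] at hterm
  linarith

theorem exists_forall_ge_iff_add_two_of_threshold
    (hx : ∀ t v, x (t + 1) v ↔ θ v ≤ infNbrs G (x t) v) :
    ∃ T, ∀ t, T ≤ t → ∀ v, (x (t + 2) v ↔ x t v) := by
  have hbdd : BddBelow (Set.range fun t => energy G θ (x t) (x (t + 1))) :=
    ((Set.finite_range fun p : (V → Prop) × (V → Prop) => energy G θ p.1 p.2).subset
      (by rintro _ ⟨t, rfl⟩; exact ⟨(x t, x (t + 1)), rfl⟩)).bddBelow
  have hchanges_nonneg (t : ℕ) : 0 ≤ ∑ v, iverson (¬(x (t + 2) v ↔ x t v)) :=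
    Finset.sum_nonneg fun v _ => iverson_nonneg _
  obtain ⟨T, hT⟩ := Int.exists_forall_ge_not_of_bddBelow
    (P := fun t => ∃ v, ¬(x (t + 2) v ↔ x t v)) hbdd
    (fun t => (le_add_of_nonneg_right (hchanges_nonneg t)).trans
      (energy_succ_add_sum_iverson_le hx t))
    (fun t ⟨v, hv⟩ => by
      have hchange : 0 < ∑ v, iverson (¬(x (t + 2) v ↔ x t v)) :=
        (iverson_of_pos hv ▸ zero_lt_one).trans_le
          (Finset.single_le_sum (fun u _ => iverson_nonneg _) (Finset.mem_univ v))
      exact (lt_add_of_pos_right _ hchange).trans_le (energy_succ_add_sum_iverson_le hx t))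
  exact ⟨T, fun t ht v => by_contra fun hv => hT t ht ⟨v, hv⟩⟩

end SimpleGraph

/-- On every finite simple graph with strict majority thresholds, the
non-progressive process started from any initial assignment reaches a cycle of length at
most two: from some time `T` on, `f_{τ+2} = f_τ`. -/
theorem stmt_15 {V : Type*} [Fintype V] (G : SimpleGraph V) (f0 : V → Prop) :
    ∃ T : ℕ, ∀ τ : ℕ, T ≤ τ → ∀ v, (stateAt G f0 (τ + 2) v ↔ stateAt G f0 τ v) :=
  G.exists_forall_ge_iff_add_two_of_threshold fun _ _ => Iff.rfl
end
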